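/- Let q be a complex number with 0 < |q| < 1. Then Σ_{n=0}^{∞} q^{3n²} (-q;q^2)_{3n} / (q^6;q^6)_{2n} = J_{24}^3 / (J_{3,24} · J_{4,24} · J_{9,24}). -/

import Mathlib

open scoped BigOperators

/-- Finite q-Pochhammer symbol `(a;q)_n`. -/
noncomputable def qPoch (a q : ℂ) (n : ℕ) : ℂ := ∏ k ∈ Finset.range n, (1 - a * q ^ k)

/-- Infinite q-Pochhammer symbol `(a;q)_∞`. -/
noncomputable def qPochInf (a q : ℂ) : ℂ := ∏' k : ℕ, (1 - a * q ^ k)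

/-- `J_{a,m} = (q^a, q^{m-a}, q^m; q^m)_∞`. -/
noncomputable def J (q : ℂ) (a m : ℕ) : ℂ :=
  qPochInf (q ^ a) (q ^ m) * qPochInf (q ^ (m - a)) (q ^ m) * qPochInf (q ^ m) (q ^ m)

/-- `J_m = (q^m;q^m)_∞`. -/
noncomputable def Jm (q : ℂ) (m : ℕ) : ℂ := qPochInf (q ^ m) (q ^ m)

/-!
With `x = q³`, `Q = q⁶`, `a = -q`, `b = -q⁵` (so `ab = Q`), splitting the finite Pochhammer
symbols turns the left side times `(q³;q⁶)_∞` into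
`g(x) = ∑ₙ (a;Q)ₙ (b;Q)ₙ / (Q²;Q²)ₙ · Q^(n choose 2) · xⁿ · (xQⁿ;Q)_∞`.
For `ab = Q` the series satisfies `g(x) = (1 - ax)(1 - bx) g(xQ²)`: the defect `D` of this
equation obeys `D(x) = -Qx · D(xQ)` after an index shift, and `D` is continuous at `0`, so `D = 0`.
Iterating and letting `xQ²ᵐ → 0`, where `g → 1`, gives `g(x) = (ax;Q²)_∞ (bx;Q²)_∞`, which is
`(-q⁴;q¹²)_∞ (-q⁸;q¹²)_∞`. The product side reduces to the same quotient through
`(z;p)_∞ (-z;p)_∞ = (z²;p²)_∞` and even/odd splitting down to base `q²⁴`.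
-/

open Filter Topology

lemma norm_pow_lt_one {q : ℂ} (hq : ‖q‖ < 1) {m : ℕ} (hm : m ≠ 0) : ‖q ^ m‖ < 1 := by
  rw [norm_pow]
  exact pow_lt_one₀ (norm_nonneg q) hq hm

section Pochhammer

variable {a q : ℂ}

lemma qPoch_succ (a q : ℂ) (n : ℕ) : qPoch a q (n + 1) = qPoch a q n * (1 - a * q ^ n) :=
  Finset.prod_range_succ _ n

lemma qPoch_mul_eq_prod (a q : ℂ) (k n : ℕ) :
    qPoch a q (k * n) = ∏ j ∈ Finset.range k, qPoch (a * q ^ j) (q ^ k) n := by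
  induction n with
  | zero => simp [qPoch]
  | succ n ih =>
    rw [Nat.mul_succ, qPoch, Finset.prod_range_add, ← qPoch, ih]
    simp only [qPoch_succ, Finset.prod_mul_distrib]
    congr 1
    refine Finset.prod_congr rfl fun j _ => ?_
    ring

lemma qPoch_mul_qPoch_neg (a q : ℂ) (n : ℕ) :
    qPoch a q n * qPoch (-a) q n = qPoch (a ^ 2) (q ^ 2) n := by
  simp only [qPoch, ← Finset.prod_mul_distrib]
  refine Finset.prod_congr rfl fun k _ => ?_
  ring

lemma qPochInf_zero (q : ℂ) : qPochInf 0 q = 1 := by simp [qPochInf]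

lemma summable_norm_mul_pow (a : ℂ) (hq : ‖q‖ < 1) :
    Summable fun k : ℕ => ‖a * q ^ k‖ := by
  simpa [norm_mul, norm_pow] using
    (summable_geometric_of_lt_one (norm_nonneg q) hq).mul_left ‖a‖

lemma multipliable_qPochInf (a : ℂ) (hq : ‖q‖ < 1) :
    Multipliable fun k : ℕ => 1 - a * q ^ k := by
  simpa [sub_eq_add_neg] using
    multipliable_one_add_of_summable (f := fun k : ℕ => -(a * q ^ k))
      (by simpa using summable_norm_mul_pow a hq)

lemma tendsto_qPoch (a : ℂ) (hq : ‖q‖ < 1) :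
    Tendsto (qPoch a q) atTop (𝓝 (qPochInf a q)) :=
  (multipliable_qPochInf a hq).hasProd.tendsto_prod_nat

lemma one_sub_mul_pow_ne_zero (ha : ‖a‖ < 1) (hq : ‖q‖ ≤ 1) (k : ℕ) :
    1 - a * q ^ k ≠ 0 := by
  rw [sub_ne_zero]
  intro h
  have hle : ‖a * q ^ k‖ < 1 := by
    rw [norm_mul, norm_pow]
    exact (mul_le_of_le_one_right (norm_nonneg a) (pow_le_one₀ (norm_nonneg q) hq)).trans_lt ha
  rw [← h, norm_one] at hle
  exact hle.false

lemma qPoch_ne_zero (ha : ‖a‖ < 1) (hq : ‖q‖ ≤ 1) (n : ℕ) : qPoch a q n ≠ 0 :=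
  Finset.prod_ne_zero_iff.2 fun k _ => one_sub_mul_pow_ne_zero ha hq k

lemma qPochInf_ne_zero (ha : ‖a‖ < 1) (hq : ‖q‖ < 1) : qPochInf a q ≠ 0 := by
  simpa [qPochInf, sub_eq_add_neg] using
    tprod_one_add_ne_zero_of_summable (f := fun k : ℕ => -(a * q ^ k))
      (fun k => by simpa [← sub_eq_add_neg] using one_sub_mul_pow_ne_zero ha hq.le k)
      (by simpa using summable_norm_mul_pow a hq)

lemma continuous_qPochInf (hq : ‖q‖ < 1) : Continuous fun a => qPochInf a q := by
  refine continuous_iff_continuousAt.2 fun a₀ => ?_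
  have hbound : ∀ᶠ a in 𝓝 a₀, ∀ k : ℕ, ‖-(a * q ^ k)‖ ≤ (‖a₀‖ + 1) * ‖q‖ ^ k := by
    filter_upwards [Metric.ball_mem_nhds a₀ one_pos] with a ha k
    rw [norm_neg, norm_mul, norm_pow]
    have : ‖a‖ ≤ ‖a₀‖ + 1 := by
      have := norm_le_of_mem_closedBall (Metric.ball_subset_closedBall ha); linarith
    gcongr
  simpa [ContinuousAt, qPochInf, sub_eq_add_neg] using
    tendsto_tprod_one_add_of_dominated_convergence
      ((summable_geometric_of_lt_one (norm_nonneg q) hq).mul_left _)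
      (fun k => ((continuous_id.mul continuous_const).neg.tendsto a₀)) hbound

lemma qPoch_mul_qPochInf (a : ℂ) (hq : ‖q‖ < 1) (n : ℕ) :
    qPoch a q n * qPochInf (a * q ^ n) q = qPochInf a q := by
  have hshift : ∀ k, 1 - a * q ^ n * q ^ k = 1 - a * q ^ (k + n) := fun k => by ring
  have hm : Multipliable fun k : ℕ => 1 - a * q ^ (k + n) := by
    simpa only [hshift] using multipliable_qPochInf (a * q ^ n) hq
  rw [qPoch, qPochInf, qPochInf,
    ← Multipliable.prod_mul_tprod_nat_mul' (f := fun k => 1 - a * q ^ k) hm]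
  simp only [hshift]

lemma qPochInf_eq_one_sub_mul (a : ℂ) (hq : ‖q‖ < 1) :
    qPochInf a q = (1 - a) * qPochInf (a * q) q := by
  simpa [qPoch] using (qPoch_mul_qPochInf a hq 1).symm

lemma qPochInf_mul_qPochInf_neg (a : ℂ) (hq : ‖q‖ < 1) :
    qPochInf a q * qPochInf (-a) q = qPochInf (a ^ 2) (q ^ 2) := by
  rw [qPochInf, qPochInf, qPochInf,
    ← (multipliable_qPochInf a hq).tprod_mul (multipliable_qPochInf (-a) hq)]
  refine tprod_congr fun k => ?_
  ring

lemma qPochInf_even_mul_odd (a : ℂ) (hq : ‖q‖ < 1) :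
    qPochInf a (q ^ 2) * qPochInf (a * q) (q ^ 2) = qPochInf a q := by
  have hq2 : ‖q ^ 2‖ < 1 := norm_pow_lt_one hq two_ne_zero
  have hsq : ∀ k, 1 - a * (q ^ 2) ^ k = 1 - a * q ^ (2 * k) := fun k => by ring
  have hodd : ∀ k, 1 - a * q * (q ^ 2) ^ k = 1 - a * q ^ (2 * k + 1) := fun k => by ring
  have he := multipliable_qPochInf a hq2
  have ho := multipliable_qPochInf (a * q) hq2
  simp only [hsq, hodd] at he ho
  rw [qPochInf, qPochInf, qPochInf, ← tprod_even_mul_odd (f := fun k => 1 - a * q ^ k) he ho]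
  simp only [hsq, hodd]

lemma exists_norm_qPochInf_le (hq : ‖q‖ < 1) :
    ∃ B, ∀ z : ℂ, ‖z‖ ≤ 1 → ‖qPochInf z q‖ ≤ B := by
  obtain ⟨B, hB⟩ := (isCompact_closedBall (0 : ℂ) 1).exists_bound_of_continuousOn
    (continuous_qPochInf hq).continuousOn
  exact ⟨B, fun z hz => hB z (mem_closedBall_zero_iff.2 hz)⟩

end Pochhammer

lemma norm_mul_pow_le {x P : ℂ} (hP : ‖P‖ ≤ 1) (m : ℕ) : ‖x * P ^ m‖ ≤ ‖x‖ := by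
  rw [norm_mul, norm_pow]
  exact mul_le_of_le_one_right (norm_nonneg x) (pow_le_one₀ (norm_nonneg P) hP)

lemma tendsto_mul_pow_nhds_zero (x : ℂ) {P : ℂ} (hP : ‖P‖ < 1) :
    Tendsto (fun m : ℕ => x * P ^ m) atTop (𝓝 0) := by
  simpa using (tendsto_pow_atTop_nhds_zero_of_norm_lt_one hP).const_mul x

section PowerSeriesLike

variable {c d : ℕ → ℂ} {f : ℕ → ℂ → ℂ} {C B : ℝ}

lemma summable_mul_pow_mul (hc : ∀ n, ‖c n‖ ≤ C) (hd : ∀ n, ‖d n‖ ≤ B) {y : ℂ}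
    (hy : ‖y‖ < 1) :
    Summable fun n => c n * y ^ n * d n := by
  have hC : 0 ≤ C := (norm_nonneg _).trans (hc 0)
  refine Summable.of_norm_bounded
    ((summable_geometric_of_lt_one (norm_nonneg y) hy).mul_left (C * B)) fun n => ?_
  rw [norm_mul, norm_mul, norm_pow, mul_right_comm C]
  gcongr
  exacts [hc n, hd n]

lemma tendsto_tsum_mul_pow_mul (hc : ∀ n, ‖c n‖ ≤ C) (hf : ∀ n y, ‖y‖ ≤ 1 → ‖f n y‖ ≤ B)
    (hcont : ∀ n, ContinuousAt (f n) 0) :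
    Tendsto (fun y => ∑' n, c n * y ^ n * f n y) (𝓝 0) (𝓝 (c 0 * f 0 0)) := by
  have hC : 0 ≤ C := (norm_nonneg _).trans (hc 0)
  have hlim : ∑' n, c n * 0 ^ n * f n 0 = c 0 * f 0 0 := by
    rw [tsum_eq_single 0 fun n hn => by simp [hn]]
    simp
  rw [← hlim]
  refine tendsto_tsum_of_dominated_convergence (bound := fun n => C * B * (1 / 2) ^ n)
    ((summable_geometric_two).mul_left _)
    (fun n => ((continuous_const.mul (continuous_pow n)).continuousAt.mul (hcont n)).tendsto) ?_
  filter_upwards [Metric.closedBall_mem_nhds (0 : ℂ) one_half_pos] with y hy n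
  rw [mem_closedBall_zero_iff] at hy
  rw [norm_mul, norm_mul, norm_pow, mul_right_comm C]
  gcongr
  exacts [hc n, hf n y (hy.trans (by norm_num))]

end PowerSeriesLike

lemma eq_zero_of_norm_le_mul_norm_comp {F : ℂ → ℂ} {Q L x : ℂ} (hQ : ‖Q‖ < 1)
    (hF : ∀ y, ‖y‖ < 1 → ‖F y‖ ≤ ‖y‖ * ‖F (y * Q)‖) (hL : Tendsto F (𝓝 0) (𝓝 L))
    (hx : ‖x‖ < 1) : F x = 0 := by
  have hiter : ∀ m : ℕ, ‖F x‖ ≤ ‖x‖ ^ m * ‖F (x * Q ^ m)‖ := by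
    intro m
    induction m with
    | zero => simp
    | succ m ih =>
      have hstep := hF _ ((norm_mul_pow_le hQ.le m).trans_lt hx)
      rw [mul_assoc, ← pow_succ] at hstep
      calc ‖F x‖ ≤ ‖x‖ ^ m * ‖F (x * Q ^ m)‖ := ih
        _ ≤ ‖x‖ ^ m * (‖x‖ * ‖F (x * Q ^ (m + 1))‖) := by
          gcongr
          exact hstep.trans (by gcongr; exact norm_mul_pow_le hQ.le m)
        _ = ‖x‖ ^ (m + 1) * ‖F (x * Q ^ (m + 1))‖ := by ring
  have hlim : Tendsto (fun m : ℕ => ‖x‖ ^ m * ‖F (x * Q ^ m)‖) atTop (𝓝 (0 * ‖L‖)) :=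
    (tendsto_pow_atTop_nhds_zero_of_lt_one (norm_nonneg x) hx).mul
      (hL.comp (tendsto_mul_pow_nhds_zero x hQ)).norm
  rw [zero_mul] at hlim
  exact norm_le_zero_iff.1 (ge_of_tendsto' hlim hiter)

lemma eq_tprod_of_eq_mul_comp {G h : ℂ → ℂ} {P x : ℂ} (hP : ‖P‖ < 1)
    (hG : ∀ y, ‖y‖ < 1 → G y = h y * G (y * P)) (hG0 : Tendsto G (𝓝 0) (𝓝 1))
    (hh : Multipliable fun k => h (x * P ^ k)) (hx : ‖x‖ < 1) :
    G x = ∏' k, h (x * P ^ k) := by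
  have hiter : ∀ m : ℕ, G x = (∏ k ∈ Finset.range m, h (x * P ^ k)) * G (x * P ^ m) := by
    intro m
    induction m with
    | zero => simp
    | succ m ih =>
      rw [ih, hG _ ((norm_mul_pow_le hP.le m).trans_lt hx), Finset.prod_range_succ, mul_assoc,
        pow_succ, mul_assoc]
  have hlim := hh.hasProd.tendsto_prod_nat.mul (hG0.comp (tendsto_mul_pow_nhds_zero x hP))
  rw [mul_one] at hlim
  exact tendsto_nhds_unique (tendsto_const_nhds.congr hiter) hlim

section PochSeries

variable (a b Q : ℂ)

noncomputable def pochCoeff (n : ℕ) : ℂ :=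
  qPoch a Q n * qPoch b Q n / qPoch (Q ^ 2) (Q ^ 2) n * Q ^ n.choose 2

noncomputable def pochSeries (x : ℂ) : ℂ :=
  ∑' n, pochCoeff a b Q n * x ^ n * qPochInf (x * Q ^ n) Q

/-- Termwise form of `pochSeries a b Q x - (1 - a x)(1 - b x) pochSeries a b Q (x Q²)`
when `a b = Q`. -/
noncomputable def pochDefect (x : ℂ) : ℂ :=
  ∑' n, pochCoeff a b Q n * x ^ n *
    ((1 - Q ^ (2 * n) + x * (Q ^ n * ((a + b) * Q ^ n - 1 - Q))) * qPochInf (x * Q ^ (n + 2)) Q)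

variable {a b Q}

lemma pochCoeff_succ_mul (hQ : ‖Q‖ < 1) (n : ℕ) :
    pochCoeff a b Q (n + 1) * (1 - Q ^ (2 * (n + 1))) =
      pochCoeff a b Q n * Q ^ n * ((1 - a * Q ^ n) * (1 - b * Q ^ n)) := by
  have hQ2 : ‖Q ^ 2‖ < 1 := norm_pow_lt_one hQ two_ne_zero
  have hne := one_sub_mul_pow_ne_zero hQ2 hQ2.le n
  have hchoose : (n + 1).choose 2 = n.choose 2 + n := by
    rw [Nat.choose_succ_succ', Nat.choose_one_right, add_comm]
  rw [pochCoeff, pochCoeff, qPoch_succ, qPoch_succ, qPoch_succ, hchoose]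
  rw [show Q ^ (2 * (n + 1)) = Q ^ 2 * (Q ^ 2) ^ n by ring]
  field_simp
  ring

lemma pochCoeff_zero : pochCoeff a b Q 0 = 1 := by simp [pochCoeff, qPoch]

lemma exists_norm_pochCoeff_le (hQ : ‖Q‖ < 1) :
    ∃ C, ∀ n, ‖pochCoeff a b Q n‖ ≤ C := by
  have hQ2 : ‖Q ^ 2‖ < 1 := norm_pow_lt_one hQ two_ne_zero
  have hlim := ((tendsto_qPoch a hQ).mul (tendsto_qPoch b hQ)).div (tendsto_qPoch _ hQ2)
    (qPochInf_ne_zero hQ2 hQ2)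
  obtain ⟨C, hC⟩ := isBounded_iff_forall_norm_le.1 (Metric.isBounded_range_of_tendsto _ hlim)
  refine ⟨C, fun n => ?_⟩
  rw [pochCoeff, norm_mul, norm_pow]
  exact (mul_le_of_le_one_right (norm_nonneg _) (pow_le_one₀ (norm_nonneg Q) hQ.le)).trans
    (hC _ ⟨n, rfl⟩)

lemma norm_one_sub_pow_le (hQ : ‖Q‖ ≤ 1) (m : ℕ) : ‖1 - Q ^ m‖ ≤ 2 := by
  calc ‖1 - Q ^ m‖ ≤ ‖(1 : ℂ)‖ + ‖Q ^ m‖ := norm_sub_le _ _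
    _ ≤ 1 + 1 := by rw [norm_one, norm_pow]; gcongr; exact pow_le_one₀ (norm_nonneg Q) hQ
    _ = 2 := by norm_num

lemma norm_pow_mul_sub_le (hQ : ‖Q‖ ≤ 1) (n : ℕ) :
    ‖Q ^ n * ((a + b) * Q ^ n - 1 - Q)‖ ≤ ‖a + b‖ + 2 := by
  have hQn : ‖Q ^ n‖ ≤ 1 := by rw [norm_pow]; exact pow_le_one₀ (norm_nonneg Q) hQ
  calc ‖Q ^ n * ((a + b) * Q ^ n - 1 - Q)‖
      ≤ 1 * (‖a + b‖ * 1 + 1 + 1) := by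
        rw [norm_mul]
        gcongr
        refine (norm_sub_le _ _).trans (add_le_add ((norm_sub_le _ _).trans ?_) hQ)
        rw [norm_mul, norm_one]
        gcongr
    _ = ‖a + b‖ + 2 := by ring

lemma exists_bound_pochDefect_factors (hQ : ‖Q‖ < 1) :
    ∃ B, ∀ n y, ‖y‖ ≤ 1 →
      ‖(1 - Q ^ (2 * n)) * qPochInf (y * Q ^ (n + 2)) Q‖ ≤ B ∧
      ‖y * (Q ^ n * ((a + b) * Q ^ n - 1 - Q)) * qPochInf (y * Q ^ (n + 2)) Q‖ ≤ B := by
  obtain ⟨B, hB⟩ := exists_norm_qPochInf_le hQ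
  refine ⟨(‖a + b‖ + 2) * B, fun n y hy => ?_⟩
  have hP := hB _ ((norm_mul_pow_le hQ.le (n + 2)).trans hy)
  have hB0 : 0 ≤ B := (norm_nonneg _).trans hP
  constructor
  · rw [norm_mul]
    gcongr
    exact (norm_one_sub_pow_le hQ.le _).trans (by linarith [norm_nonneg (a + b)])
  · rw [norm_mul, norm_mul]
    calc ‖y‖ * ‖Q ^ n * ((a + b) * Q ^ n - 1 - Q)‖ * ‖qPochInf (y * Q ^ (n + 2)) Q‖
        ≤ 1 * (‖a + b‖ + 2) * B := by gcongr; exact norm_pow_mul_sub_le hQ.le n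
      _ = (‖a + b‖ + 2) * B := by ring

lemma summable_pochSeries (hQ : ‖Q‖ < 1) {x : ℂ} (hx : ‖x‖ < 1) :
    Summable fun n => pochCoeff a b Q n * x ^ n * qPochInf (x * Q ^ n) Q := by
  obtain ⟨C, hC⟩ := exists_norm_pochCoeff_le (a := a) (b := b) hQ
  obtain ⟨B, hB⟩ := exists_norm_qPochInf_le hQ
  exact summable_mul_pow_mul hC (fun n => hB _ ((norm_mul_pow_le hQ.le n).trans hx.le)) hx

lemma tendsto_pochSeries (hQ : ‖Q‖ < 1) : Tendsto (pochSeries a b Q) (𝓝 0) (𝓝 1) := by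
  obtain ⟨C, hC⟩ := exists_norm_pochCoeff_le (a := a) (b := b) hQ
  obtain ⟨B, hB⟩ := exists_norm_qPochInf_le hQ
  have hcont : ∀ n, ContinuousAt (fun y => qPochInf (y * Q ^ n) Q) 0 := fun n =>
    ((continuous_qPochInf hQ).comp (continuous_id.mul continuous_const)).continuousAt
  have h := tendsto_tsum_mul_pow_mul hC
    (fun n y hy => hB _ ((norm_mul_pow_le hQ.le n).trans hy)) hcont
  simp only [pochCoeff_zero, zero_mul, qPochInf_zero, one_mul] at h
  exact h

lemma pochSeries_term_sub (hab : a * b = Q) (hQ : ‖Q‖ < 1) (x : ℂ) (n : ℕ) :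
    pochCoeff a b Q n * x ^ n * qPochInf (x * Q ^ n) Q -
        (1 - a * x) * (1 - b * x) *
          (pochCoeff a b Q n * (x * Q ^ 2) ^ n * qPochInf (x * Q ^ 2 * Q ^ n) Q) =
      pochCoeff a b Q n * x ^ n *
        ((1 - Q ^ (2 * n) + x * (Q ^ n * ((a + b) * Q ^ n - 1 - Q))) *
          qPochInf (x * Q ^ (n + 2)) Q) := by
  rw [qPochInf_eq_one_sub_mul _ hQ, qPochInf_eq_one_sub_mul (x * Q ^ n * Q) hQ,
    show x * Q ^ n * Q * Q = x * Q ^ (n + 2) by ring,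
    show x * Q ^ 2 * Q ^ n = x * Q ^ (n + 2) by ring, ← hab]
  ring

lemma pochDefect_term_shift (hab : a * b = Q) (hQ : ‖Q‖ < 1) (x : ℂ) (n : ℕ) :
    pochCoeff a b Q (n + 1) * x ^ (n + 1) *
        ((1 - Q ^ (2 * (n + 1))) * qPochInf (x * Q ^ (n + 1 + 2)) Q) +
      pochCoeff a b Q n * x ^ n *
        (x * (Q ^ n * ((a + b) * Q ^ n - 1 - Q)) * qPochInf (x * Q ^ (n + 2)) Q) =
      -(Q * x) * (pochCoeff a b Q n * (x * Q) ^ n *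
        ((1 - Q ^ (2 * n) + x * Q * (Q ^ n * ((a + b) * Q ^ n - 1 - Q))) *
          qPochInf (x * Q * Q ^ (n + 2)) Q)) := by
  have hc := pochCoeff_succ_mul (a := a) (b := b) hQ n
  rw [qPochInf_eq_one_sub_mul (x * Q ^ (n + 2)) hQ,
    show x * Q ^ (n + 2) * Q = x * Q ^ (n + 1 + 2) by ring,
    show x * Q * Q ^ (n + 2) = x * Q ^ (n + 1 + 2) by ring]
  linear_combination (x ^ (n + 1) * qPochInf (x * Q ^ (n + 1 + 2)) Q) *
    (hc + pochCoeff a b Q n * Q ^ (3 * n) * hab)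

lemma pochSeries_sub_eq_pochDefect (hab : a * b = Q) (hQ : ‖Q‖ < 1) {x : ℂ}
    (hx : ‖x‖ < 1) :
    pochSeries a b Q x - (1 - a * x) * (1 - b * x) * pochSeries a b Q (x * Q ^ 2) =
      pochDefect a b Q x := by
  have hxQ : ‖x * Q ^ 2‖ < 1 := (norm_mul_pow_le hQ.le 2).trans_lt hx
  rw [pochSeries, pochSeries, pochDefect, ← tsum_mul_left,
    ← (summable_pochSeries hQ hx).tsum_sub ((summable_pochSeries hQ hxQ).mul_left _)]
  exact tsum_congr (pochSeries_term_sub hab hQ x)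

lemma pochDefect_eq_mul (hab : a * b = Q) (hQ : ‖Q‖ < 1) {x : ℂ} (hx : ‖x‖ < 1) :
    pochDefect a b Q x = -(Q * x) * pochDefect a b Q (x * Q) := by
  obtain ⟨C, hC⟩ := exists_norm_pochCoeff_le (a := a) (b := b) hQ
  obtain ⟨B, hB⟩ := exists_bound_pochDefect_factors (a := a) (b := b) hQ
  set V : ℕ → ℂ := fun n => pochCoeff a b Q n * x ^ n *
    ((1 - Q ^ (2 * n)) * qPochInf (x * Q ^ (n + 2)) Q)
  set W : ℕ → ℂ := fun n => pochCoeff a b Q n * x ^ n *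
    (x * (Q ^ n * ((a + b) * Q ^ n - 1 - Q)) * qPochInf (x * Q ^ (n + 2)) Q)
  have hV : Summable V := summable_mul_pow_mul hC (fun n => (hB n x hx.le).1) hx
  have hW : Summable W := summable_mul_pow_mul hC (fun n => (hB n x hx.le).2) hx
  -- `V 0 = 0` lets the `1 - Q ^ (2 * n)` part be reindexed from `n + 1`
  have hV0 : V 0 = 0 := by simp [V]
  calc pochDefect a b Q x = ∑' n, (V n + W n) := tsum_congr fun n => by simp only [V, W]; ring
    _ = ∑' n, (V (n + 1) + W n) := by
      rw [hV.tsum_add hW, hV.tsum_eq_zero_add, hV0, zero_add,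
        ((summable_nat_add_iff 1).2 hV).tsum_add hW]
    _ = -(Q * x) * pochDefect a b Q (x * Q) := by
      rw [pochDefect, ← tsum_mul_left]
      exact tsum_congr (pochDefect_term_shift hab hQ x)

lemma tendsto_pochDefect (hQ : ‖Q‖ < 1) :
    Tendsto (pochDefect a b Q) (𝓝 0) (𝓝 0) := by
  obtain ⟨C, hC⟩ := exists_norm_pochCoeff_le (a := a) (b := b) hQ
  obtain ⟨B, hB⟩ := exists_bound_pochDefect_factors (a := a) (b := b) hQ
  have hcont : ∀ n, ContinuousAt (fun y => (1 - Q ^ (2 * n) + y *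
      (Q ^ n * ((a + b) * Q ^ n - 1 - Q))) * qPochInf (y * Q ^ (n + 2)) Q) 0 := fun n =>
    ((continuous_const.add (continuous_id.mul continuous_const)).mul
      ((continuous_qPochInf hQ).comp (continuous_id.mul continuous_const))).continuousAt
  have hbound : ∀ n (y : ℂ), ‖y‖ ≤ 1 → ‖(1 - Q ^ (2 * n) + y *
      (Q ^ n * ((a + b) * Q ^ n - 1 - Q))) * qPochInf (y * Q ^ (n + 2)) Q‖ ≤ B + B :=
    fun n y hy => by
      rw [add_mul]
      exact (norm_add_le _ _).trans (add_le_add (hB n y hy).1 (hB n y hy).2)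
  have h := tendsto_tsum_mul_pow_mul hC hbound hcont
  simp only [mul_zero, pow_zero, sub_self, zero_mul, zero_add] at h
  exact h

lemma pochDefect_eq_zero (hab : a * b = Q) (hQ : ‖Q‖ < 1) {x : ℂ} (hx : ‖x‖ < 1) :
    pochDefect a b Q x = 0 := by
  refine eq_zero_of_norm_le_mul_norm_comp hQ (fun y hy => ?_) (tendsto_pochDefect hQ) hx
  rw [pochDefect_eq_mul hab hQ hy, norm_mul, norm_neg, norm_mul]
  gcongr
  exact mul_le_of_le_one_left (norm_nonneg y) hQ.le

theorem pochSeries_eq (hab : a * b = Q) (hQ : ‖Q‖ < 1) {x : ℂ} (hx : ‖x‖ < 1) :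
    pochSeries a b Q x = qPochInf (a * x) (Q ^ 2) * qPochInf (b * x) (Q ^ 2) := by
  have hQ2 : ‖Q ^ 2‖ < 1 := norm_pow_lt_one hQ two_ne_zero
  have hfun : ∀ y, ‖y‖ < 1 →
      pochSeries a b Q y = (1 - a * y) * (1 - b * y) * pochSeries a b Q (y * Q ^ 2) := fun y hy =>
    sub_eq_zero.1 ((pochSeries_sub_eq_pochDefect hab hQ hy).trans (pochDefect_eq_zero hab hQ hy))
  have hmul : Multipliable fun k : ℕ =>
      (1 - a * (x * (Q ^ 2) ^ k)) * (1 - b * (x * (Q ^ 2) ^ k)) := by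
    simpa only [mul_assoc] using
      (multipliable_qPochInf (a * x) hQ2).mul (multipliable_qPochInf (b * x) hQ2)
  rw [eq_tprod_of_eq_mul_comp hQ2 hfun (tendsto_pochSeries hQ) hmul hx, qPochInf, qPochInf,
    ← (multipliable_qPochInf (a * x) hQ2).tprod_mul (multipliable_qPochInf (b * x) hQ2)]
  simp only [mul_assoc]

end PochSeries

section Specialization

variable {q : ℂ}

lemma pow_three_mul_sq (q : ℂ) (n : ℕ) :
    q ^ (3 * n ^ 2) = (q ^ 3) ^ n * (q ^ 6) ^ n.choose 2 := by
  induction n with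
  | zero => simp
  | succ n ih =>
    rw [Nat.choose_succ_succ', Nat.choose_one_right,
      show 3 * (n + 1) ^ 2 = 3 * n ^ 2 + (6 * n + 3) by ring, pow_add, ih]
    ring

lemma term_mul_qPochInf_eq (hq : ‖q‖ < 1) (n : ℕ) :
    q ^ (3 * n ^ 2) * qPoch (-q) (q ^ 2) (3 * n) / qPoch (q ^ 6) (q ^ 6) (2 * n) *
        qPochInf (q ^ 3) (q ^ 6) =
      pochCoeff (-q) (-(q ^ 5)) (q ^ 6) n * (q ^ 3) ^ n *
        qPochInf (q ^ 3 * (q ^ 6) ^ n) (q ^ 6) := by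
  have hq6 := norm_pow_lt_one hq (by norm_num : 6 ≠ 0)
  have hnum : qPoch (-q) (q ^ 2) (3 * n) =
      qPoch (-q) (q ^ 6) n * qPoch (-(q ^ 3)) (q ^ 6) n * qPoch (-(q ^ 5)) (q ^ 6) n := by
    rw [qPoch_mul_eq_prod]
    simp only [Finset.prod_range_succ, Finset.prod_range_zero, one_mul]
    ring_nf
  have hden : qPoch (q ^ 6) (q ^ 6) (2 * n) =
      qPoch (q ^ 6) (q ^ 12) n * qPoch (q ^ 12) (q ^ 12) n := by
    rw [qPoch_mul_eq_prod]
    simp only [Finset.prod_range_succ, Finset.prod_range_zero, one_mul]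
    ring_nf
  have hsq : qPoch (q ^ 3) (q ^ 6) n * qPoch (-(q ^ 3)) (q ^ 6) n = qPoch (q ^ 6) (q ^ 12) n := by
    rw [qPoch_mul_qPoch_neg]
    ring_nf
  have hne : qPoch (q ^ 6) (q ^ 12) n ≠ 0 :=
    qPoch_ne_zero hq6 (norm_pow_lt_one hq (by norm_num)).le n
  rw [← hsq, mul_ne_zero_iff] at hne
  rw [pochCoeff, ← qPoch_mul_qPochInf (q ^ 3) hq6 n, hnum, hden, pow_three_mul_sq,
    show (q ^ 6) ^ 2 = q ^ 12 by ring, ← hsq]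
  field_simp [hne.1, hne.2]

lemma tsum_eq_qPochInf_div (hq : ‖q‖ < 1) :
    ∑' n : ℕ, q ^ (3 * n ^ 2) * qPoch (-q) (q ^ 2) (3 * n) / qPoch (q ^ 6) (q ^ 6) (2 * n) =
      qPochInf (-(q ^ 4)) (q ^ 12) * qPochInf (-(q ^ 8)) (q ^ 12) / qPochInf (q ^ 3) (q ^ 6) := by
  have hq3 := norm_pow_lt_one hq three_ne_zero
  have hq6 := norm_pow_lt_one hq (by norm_num : 6 ≠ 0)
  have h := pochSeries_eq (a := -q) (b := -(q ^ 5)) (by ring) hq6 hq3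
  rw [show -q * q ^ 3 = -(q ^ 4) by ring, show -(q ^ 5) * q ^ 3 = -(q ^ 8) by ring,
    show (q ^ 6) ^ 2 = q ^ 12 by ring] at h
  rw [eq_div_iff (qPochInf_ne_zero hq3 hq6), ← tsum_mul_right, ← h, pochSeries]
  exact tsum_congr (term_mul_qPochInf_eq hq)

lemma qPochInf_pow_eq_mul (hq : ‖q‖ < 1) (a : ℕ) {m : ℕ} (hm : m ≠ 0) :
    qPochInf (q ^ a) (q ^ m) =
      qPochInf (q ^ a) (q ^ (2 * m)) * qPochInf (q ^ (a + m)) (q ^ (2 * m)) := by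
  simpa only [← pow_mul, ← pow_add, mul_comm m 2] using
    (qPochInf_even_mul_odd (q ^ a) (norm_pow_lt_one hq hm)).symm

lemma qPochInf_pow_mul_qPochInf_neg_pow (hq : ‖q‖ < 1) (a : ℕ) {m : ℕ} (hm : m ≠ 0) :
    qPochInf (q ^ a) (q ^ m) * qPochInf (-(q ^ a)) (q ^ m) =
      qPochInf (q ^ (2 * a)) (q ^ (2 * m)) := by
  simpa only [← pow_mul, mul_comm a 2, mul_comm m 2] using
    qPochInf_mul_qPochInf_neg (q ^ a) (norm_pow_lt_one hq hm)

lemma Jm_pow_div_J_mul_J_mul_J (hq : ‖q‖ < 1) :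
    Jm q 24 ^ 3 / (J q 3 24 * J q 4 24 * J q 9 24) =
      qPochInf (-(q ^ 4)) (q ^ 12) * qPochInf (-(q ^ 8)) (q ^ 12) / qPochInf (q ^ 3) (q ^ 6) := by
  have h6 := qPochInf_pow_eq_mul hq 3 (m := 6) (by norm_num)
  have h3 := qPochInf_pow_eq_mul hq 3 (m := 12) (by norm_num)
  have h9 := qPochInf_pow_eq_mul hq 9 (m := 12) (by norm_num)
  have h4 := qPochInf_pow_eq_mul hq 4 (m := 12) (by norm_num)
  have h8 := qPochInf_pow_eq_mul hq 8 (m := 12) (by norm_num)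
  have hn4 := qPochInf_pow_mul_qPochInf_neg_pow hq 4 (m := 12) (by norm_num)
  have hn8 := qPochInf_pow_mul_qPochInf_neg_pow hq 8 (m := 12) (by norm_num)
  have hne : ∀ k, k ≠ 0 → qPochInf (q ^ k) (q ^ 24) ≠ 0 := fun k hk =>
    qPochInf_ne_zero (norm_pow_lt_one hq hk) (norm_pow_lt_one hq (by norm_num))
  simp only [Nat.reduceMul, Nat.reduceAdd] at h6 h3 h9 h4 h8 hn4 hn8
  rw [h4] at hn4
  rw [h8] at hn8
  have hneg : qPochInf (-(q ^ 4)) (q ^ 12) * qPochInf (-(q ^ 8)) (q ^ 12) =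
      (qPochInf (q ^ 4) (q ^ 24) * qPochInf (q ^ 20) (q ^ 24))⁻¹ := by
    refine eq_inv_of_mul_eq_one_left (mul_right_cancel₀
      (mul_ne_zero (hne 8 (by norm_num)) (hne 16 (by norm_num))) ?_)
    linear_combination (qPochInf (q ^ 8) (q ^ 24) * qPochInf (q ^ 20) (q ^ 24) *
      qPochInf (-(q ^ 8)) (q ^ 12)) * hn4 + qPochInf (q ^ 8) (q ^ 24) * hn8
  simp only [J, Jm, Nat.reduceSub]
  rw [hneg, h6, h3, h9]
  field_simp [hne 24 (by norm_num)]

end Specialization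

theorem lem_W_1_general (q : ℂ) (hq1 : ‖q‖ < 1) :
    ∑' n : ℕ, q ^ (3 * n ^ 2) * qPoch (-q) (q ^ 2) (3 * n) / qPoch (q ^ 6) (q ^ 6) (2 * n) =
      Jm q 24 ^ 3 / (J q 3 24 * J q 4 24 * J q 9 24) :=
  (tsum_eq_qPochInf_div hq1).trans (Jm_pow_div_J_mul_J_mul_J hq1).symm

theorem lem_W_1 (q : ℂ) (hq0 : 0 < ‖q‖) (hq1 : ‖q‖ < 1) :
    ∑' n : ℕ, q ^ (3 * n ^ 2) * qPoch (-q) (q ^ 2) (3 * n) / qPoch (q ^ 6) (q ^ 6) (2 * n) =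
      Jm q 24 ^ 3 / (J q 3 24 * J q 4 24 * J q 9 24) :=
  lem_W_1_general q hq1
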